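/- Let A → B be a ring homomorphism such that B is finitely generated projective over A, and let M be a B-module. Then fd_B(Hom_A(B, M)) ≤ fd_A(M), assuming additionally that Hom_A(B, A) is projective as a B-module. -/

import Mathlib

/-- Flatness of a left module over a possibly noncommutative ring, via Lambek's criterion:
`M` is flat over `R` iff its character module `Hom_ℤ(M, ℚ/ℤ)` is injective as a right
`R`-module (this is equivalent to exactness of `(-) ⊗_R M`). -/
def IsFlat (R M : Type) [Ring R] [AddCommGroup M] [Module R M] : Prop :=
  Module.Injective Rᵈᵐᵃ (M →+ AddCircle (1 : ℚ))

/-- `flatDimLE R d M` : the flat dimension of `M` over `R` is at most `d`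
(there is a flat resolution of length `≤ d`). -/
def flatDimLE (R : Type) [Ring R] : ℕ → ModuleCat.{0} R → Prop
  | 0, M => IsFlat R M
  | d+1, M => ∃ (F : ModuleCat.{0} R) (g : F →ₗ[R] M),
      IsFlat R F ∧ Function.Surjective g ∧
        flatDimLE R d (ModuleCat.of R (LinearMap.ker g))

/-- Flat dimension at most `d`, for a bare module. -/
def FlatDimLE (R M : Type) [Ring R] [AddCommGroup M] [Module R M] (d : ℕ) : Prop :=
  flatDimLE R d (ModuleCat.of R M)

/-- `projDimLE R d M` : the projective dimension of `M` over `R` is at most `d`. -/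
def projDimLE (R : Type) [Ring R] : ℕ → ModuleCat.{0} R → Prop
  | 0, M => Module.Projective R M
  | d+1, M => ∃ (F : ModuleCat.{0} R) (g : F →ₗ[R] M),
      Module.Projective R F ∧ Function.Surjective g ∧
        projDimLE R d (ModuleCat.of R (LinearMap.ker g))

/-- `R` has finite (left) global dimension: there is a uniform bound on the projective
dimension of all `R`-modules. -/
def HasFiniteGlobalDim (R : Type) [Ring R] : Prop :=
  ∃ g : ℕ, ∀ M : ModuleCat.{0} R, projDimLE R g M

/-!
`Hom_A(B, -)` preserves kernels, and surjections because `B` is projective over `A`; applying it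
to a flat cover `F → M` and inducting on `d` reduces everything to flat modules. For a flat
`A`-module `N`, a dual basis of `B` over `A` identifies the character module of
`Hom_A(B, N) ≅ Hom_A(B, A) ⊗_A N` with `Hom_{Aᵒᵖ}(Hom_A(B, A), N⁺)`. This is an injective right
`B`-module because `N⁺` is an injective right `A`-module and `Hom_A(B, A)` is a projective
`B`-module: by Baer's criterion one only has to extend maps out of right ideals `I`, and a dual
basis of a projective `P` shows that `I ⊗_B P → P` is injective, so that the extension can be done
inside `P`.
-/

open DomMulAct

-- `Aᵈᵐᵃ` carries two non-reducibly-equal `NonAssocSemiring` structures; with both around,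
-- `Aᵈᵐᵃ`-linear maps fail to coerce to functions.
attribute [-instance] DomMulAct.instNonAssocSemiringOfMulOpposite

theorem Module.Injective.of_linearEquiv {R Q Q' : Type} [Ring R] [AddCommGroup Q]
    [AddCommGroup Q'] [Module R Q] [Module R Q'] [Module.Injective R Q] (e : Q ≃ₗ[R] Q') :
    Module.Injective R Q' :=
  ((Module.Baer.of_injective ‹_›).of_equiv e).injective

theorem Module.Injective.exists_comp_eq_of_ker_le {T F P Q : Type} [Ring T] [AddCommGroup F]
    [Module T F] [AddCommGroup P] [Module T P] [AddCommGroup Q] [Module T Q]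
    [Module.Injective T Q] (μ : F →ₗ[T] P) (ψ : F →ₗ[T] Q)
    (h : LinearMap.ker μ ≤ LinearMap.ker ψ) : ∃ χ : P →ₗ[T] Q, χ ∘ₗ μ = ψ := by
  obtain ⟨χ, hχ⟩ := Module.Injective.extension_property T Q _ P
    ((LinearMap.ker μ).liftQ μ le_rfl)
    (LinearMap.ker_eq_bot.mp (Submodule.ker_liftQ_eq_bot _ _ _ le_rfl))
    ((LinearMap.ker μ).liftQ ψ h)
  exact ⟨χ, LinearMap.ext fun x => congr($hχ (Submodule.Quotient.mk x))⟩

theorem Module.Finite.exists_dualBasis (R M : Type*) [Ring R] [AddCommGroup M] [Module R M]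
    [Module.Finite R M] [Module.Projective R M] :
    ∃ (n : ℕ) (x : Fin n → M) (φ : Fin n → M →ₗ[R] R), ∀ y, ∑ i, φ i y • x i = y := by
  obtain ⟨n, π, σ, -, -, hπσ⟩ := Module.Finite.exists_comp_eq_id_of_projective R M
  refine ⟨n, fun i => π fun j => if i = j then 1 else 0, fun i => LinearMap.proj i ∘ₗ σ,
    fun y => ?_⟩
  conv_rhs => rw [← LinearMap.id_apply (R := R) y, ← hπσ, LinearMap.comp_apply,
    LinearMap.pi_apply_eq_sum_univ π]
  rfl

section InjectiveHom

variable {R T P Q : Type} [Ring R] [Ring T] [AddCommGroup P] [Module R P] [Module T P]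
  [SMulCommClass T R P] [AddCommGroup Q] [Module T Q]

-- A left ideal of `Rᵈᵐᵃ` is a right ideal of `R`; `I →₀ P` stands in for `I ⊗_R P`.
variable (T) in
noncomputable def finsuppIdealSmul (I : Ideal Rᵈᵐᵃ) : (I →₀ P) →ₗ[T] P :=
  haveI := SMulCommClass.symm T R P
  Finsupp.lsum ℕ fun i => DistribSMul.toLinearMap T P (mk.symm (i : Rᵈᵐᵃ))

theorem finsuppIdealSmul_single (I : Ideal Rᵈᵐᵃ) (i : I) (p : P) :
    finsuppIdealSmul T I (Finsupp.single i p) = mk.symm (i : Rᵈᵐᵃ) • p := by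
  simp [finsuppIdealSmul]

theorem ker_finsuppIdealSmul_le [Module.Projective R P] {I : Ideal Rᵈᵐᵃ}
    (g : I →ₗ[Rᵈᵐᵃ] (P →ₗ[T] Q)) :
    LinearMap.ker (finsuppIdealSmul T I) ≤
      LinearMap.ker (Finsupp.lsum ℕ fun i => g i) := by
  obtain ⟨s, hs⟩ := Module.projective_def.mp ‹Module.Projective R P›
  -- `β` expands `Σ iₖ ⊗ pₖ` in the dual basis `s`: its coordinates lie in `I` and depend only on
  -- `Σ iₖ pₖ`, and `Γ ∘ β` is the map `Σ iₖ ⊗ pₖ ↦ Σ g iₖ pₖ` to be factored.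
  let scale (i : I) : R →+ I := AddMonoidHom.mk' (fun r => mk r • i) fun r r' => add_smul _ _ _
  let β : (I →₀ P) →+ (P →₀ I) := Finsupp.liftAddHom fun i =>
    (Finsupp.mapRange.addMonoidHom (scale i)).comp s.toAddMonoidHom
  let Γ : (P →₀ I) →+ Q := Finsupp.liftAddHom fun p =>
    AddMonoidHom.mk' (fun c => g c p) fun c c' => by rw [map_add, LinearMap.add_apply]
  have hΓ (i : I) : Γ.comp (Finsupp.mapRange.addMonoidHom (scale i)) =
      (g i).toAddMonoidHom.comp (Finsupp.linearCombination R id).toAddMonoidHom := by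
    refine Finsupp.addHom_ext fun q r => ?_
    simp only [AddMonoidHom.coe_comp, Function.comp_apply, Finsupp.mapRange.addMonoidHom_apply,
      Finsupp.mapRange_single, Finsupp.liftAddHom_apply_single, Γ]
    show g (mk r • i) q = g i (Finsupp.linearCombination R id (Finsupp.single q r))
    rw [map_smul, Finsupp.linearCombination_single]
    rfl
  have hΓβ (v : I →₀ P) : Γ (β v) = Finsupp.lsum ℕ (fun i => g i) v := by
    refine DFunLike.congr_fun (Finsupp.addHom_ext (f := Γ.comp β)
      (g := (Finsupp.lsum ℕ (fun i => g i)).toAddMonoidHom) fun i p => ?_) v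
    simpa [β, hs p] using DFunLike.congr_fun (hΓ i) (s p)
  have hβ (v : I →₀ P) (q : P) : (β v q : Rᵈᵐᵃ) = mk (s (finsuppIdealSmul T I v) q) := by
    induction v using Finsupp.induction_linear with
    | zero => simp; rfl
    | add v w hv hw => simp only [map_add, Finsupp.add_apply, Submodule.coe_add, hv, hw]; rfl
    | single i p => simp [β, scale, finsuppIdealSmul_single, mk_mul]; rfl
  intro v hv
  rw [LinearMap.mem_ker] at hv ⊢
  have hβv : β v = 0 := Finsupp.ext fun q => Subtype.ext (by rw [hβ, hv]; simp; rfl)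
  rw [← hΓβ, hβv, map_zero]

theorem Module.injective_linearMap_domMulAct [Module.Projective R P] [Module.Injective T Q] :
    Module.Injective Rᵈᵐᵃ (P →ₗ[T] Q) := by
  refine Module.Baer.injective fun I g => ?_
  obtain ⟨χ, hχ⟩ := Module.Injective.exists_comp_eq_of_ker_le (finsuppIdealSmul T I) _
    (ker_finsuppIdealSmul_le g)
  refine ⟨LinearMap.toSpanSingleton Rᵈᵐᵃ _ χ, fun i hi => LinearMap.ext fun p => ?_⟩
  have := congr($hχ (Finsupp.single ⟨i, hi⟩ p))
  simp only [LinearMap.comp_apply, finsuppIdealSmul_single, Finsupp.lsum_single] at this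
  exact this

end InjectiveHom

section CharacterModule

variable {R X Y : Type} [Ring R] [AddCommGroup X] [AddCommGroup Y] [Module R X] [Module R Y]

def characterCongr (C : Type) [AddCommGroup C] (e : X ≃ₗ[R] Y) :
    (Y →+ C) ≃ₗ[Rᵈᵐᵃ] (X →+ C) where
  toFun χ := χ.comp e.toLinearMap.toAddMonoidHom
  invFun χ := χ.comp e.symm.toLinearMap.toAddMonoidHom
  left_inv χ := by ext; simp
  right_inv χ := by ext; simp
  map_add' _ _ := rfl
  map_smul' c χ := AddMonoidHom.ext fun x => congrArg χ (e.map_smul (mk.symm c) x).symm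

theorem IsFlat.of_linearEquiv (e : X ≃ₗ[R] Y) (h : IsFlat R X) : IsFlat R Y :=
  haveI : Module.Injective Rᵈᵐᵃ (X →+ AddCircle (1 : ℚ)) := h
  Module.Injective.of_linearEquiv (characterCongr _ e.symm)

theorem FlatDimLE.of_linearEquiv {d : ℕ} :
    ∀ {X Y : Type} [AddCommGroup X] [AddCommGroup Y] [Module R X] [Module R Y],
      (X ≃ₗ[R] Y) → FlatDimLE R X d → FlatDimLE R Y d := by
  induction d with
  | zero => exact fun e => IsFlat.of_linearEquiv e
  | succ d ih =>
    rintro X Y _ _ _ _ e ⟨F, g, hF, hg, hker⟩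
    refine ⟨F, e.toLinearMap ∘ₗ g, hF, e.surjective.comp hg, ?_⟩
    have : LinearMap.ker (e.toLinearMap ∘ₗ g) = LinearMap.ker g := by
      rw [LinearMap.ker_comp, LinearEquiv.ker, Submodule.comap_bot]
    exact ih (LinearEquiv.ofEq _ _ this.symm) hker

end CharacterModule

section HomFlat

variable {A B : Type} [Ring A] [Ring B] [Module A B]

-- `Aᵈᵐᵃ` is `Aᵐᵒᵖ` under another name, acting on `Hom_A(B, A)` through the codomain.
abbrev dualModuleDomMulAct (A B : Type) [Ring A] [AddCommGroup B] [Module A B] :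
    Module Aᵈᵐᵃ (B →ₗ[A] A) :=
  inferInstanceAs (Module Aᵐᵒᵖ (B →ₗ[A] A))

attribute [local instance] dualModuleDomMulAct

theorem smulCommClass_dual [Module B (B →ₗ[A] A)]
    (hdual : ∀ (b : B) (h : B →ₗ[A] A) (x : B), (b • h) x = h (x * b)) :
    SMulCommClass Aᵈᵐᵃ B (B →ₗ[A] A) :=
  ⟨fun c b p => LinearMap.ext fun x => by
    rw [hdual]
    show (b • p) x * mk.symm c = p (x * b) * mk.symm c
    rw [hdual]⟩

variable {N : Type} [AddCommGroup N] [Module A N]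

variable (A B N) in
def smulRightAddHom : (B →ₗ[A] A) →+ N →+ (B →ₗ[A] N) :=
  AddMonoidHom.mk' (fun p => AddMonoidHom.mk' p.smulRight fun n n' => by ext; simp [smul_add])
    fun p p' => by ext; simp [add_smul]

variable [Module B (B →ₗ[A] A)] [Module B (B →ₗ[A] N)]

/-- Restriction of a character of `Hom_A(B, N)` along `Hom_A(B, A) ⊗_A N → Hom_A(B, N)`. -/
def restrictDual (C : Type) [AddCommGroup C] [SMulCommClass Aᵈᵐᵃ B (B →ₗ[A] A)]
    (hdual : ∀ (b : B) (h : B →ₗ[A] A) (x : B), (b • h) x = h (x * b))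
    (hdualN : ∀ (b : B) (h : B →ₗ[A] N) (x : B), (b • h) x = h (x * b)) :
    ((B →ₗ[A] N) →+ C) →ₗ[Bᵈᵐᵃ] ((B →ₗ[A] A) →ₗ[Aᵈᵐᵃ] (N →+ C)) where
  toFun χ :=
    { toFun p := χ.comp (smulRightAddHom A B N p)
      map_add' p p' := by ext; simp
      map_smul' c p := by
        ext n
        show χ _ = χ _
        congr 1
        ext y
        exact mul_smul _ _ _ }
  map_add' χ χ' := rfl
  map_smul' c χ := by
    ext p n
    show χ _ = χ _
    congr 1
    ext y
    simp [smulRightAddHom, hdual, hdualN]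

theorem restrictDual_bijective (C : Type) [AddCommGroup C] [Module.Finite A B]
    [Module.Projective A B] [SMulCommClass Aᵈᵐᵃ B (B →ₗ[A] A)]
    (hdual : ∀ (b : B) (h : B →ₗ[A] A) (x : B), (b • h) x = h (x * b))
    (hdualN : ∀ (b : B) (h : B →ₗ[A] N) (x : B), (b • h) x = h (x * b)) :
    Function.Bijective (restrictDual C hdual hdualN) := by
  obtain ⟨n, x, φ, hx⟩ := Module.Finite.exists_dualBasis A B
  have expand_hom (h : B →ₗ[A] N) : ∑ i, smulRightAddHom A B N (φ i) (h (x i)) = h := by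
    ext y
    conv_rhs => rw [← hx y, map_sum]
    simp [smulRightAddHom, LinearMap.sum_apply]
  have expand_dual (p : B →ₗ[A] A) : ∑ i, mk (p (x i)) • φ i = p := by
    ext y
    simp only [LinearMap.sum_apply]
    conv_rhs => rw [← hx y, map_sum]
    simp only [map_smul]
    rfl
  constructor
  · refine (injective_iff_map_eq_zero _).mpr fun χ hχ => AddMonoidHom.ext fun h => ?_
    rw [← expand_hom h, map_sum]
    exact Finset.sum_eq_zero fun i _ => congr($hχ (φ i) (h (x i)))
  · intro ψ
    refine ⟨∑ i, (ψ (φ i)).comp (LinearMap.evalAddMonoidHom (x i)), ?_⟩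
    ext p m
    conv_rhs => rw [← expand_dual p, map_sum]
    simp [restrictDual, smulRightAddHom]

theorem isFlat_linearMap [Module.Finite A B] [Module.Projective A B]
    [Module.Projective B (B →ₗ[A] A)]
    (hdual : ∀ (b : B) (h : B →ₗ[A] A) (x : B), (b • h) x = h (x * b))
    (hdualN : ∀ (b : B) (h : B →ₗ[A] N) (x : B), (b • h) x = h (x * b)) (hN : IsFlat A N) :
    IsFlat B (B →ₗ[A] N) :=
  haveI := smulCommClass_dual hdual
  haveI : Module.Injective Aᵈᵐᵃ (N →+ AddCircle (1 : ℚ)) := hN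
  haveI := Module.injective_linearMap_domMulAct (R := B) (T := Aᵈᵐᵃ) (P := B →ₗ[A] A)
    (Q := N →+ AddCircle (1 : ℚ))
  Module.Injective.of_linearEquiv
    (LinearEquiv.ofBijective _ (restrictDual_bijective _ hdual hdualN)).symm

end HomFlat

variable (A B N : Type) [Ring A] [Ring B] [Module A B] [IsScalarTower A B B] [AddCommGroup N]
  [Module A N] in
/-- `Hom_A(B, N)` as a `B`-module through right multiplication on `B`: `(b • h) x = h (x * b)`. -/
abbrev homModule : Module B (B →ₗ[A] N) :=
  haveI : SMulCommClass A Bᵐᵒᵖ B := ⟨fun a b x => (smul_mul_assoc a x b.unop).symm⟩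
  Module.compHom (R := Bᵐᵒᵖᵈᵐᵃ) (B →ₗ[A] N) (RingEquiv.opOp B).toRingHom

theorem flatDimLE_linearMap {A B : Type} [Ring A] [Ring B] [Module A B] [IsScalarTower A B B]
    [Module.Finite A B] [Module.Projective A B] [Module B (B →ₗ[A] A)]
    [Module.Projective B (B →ₗ[A] A)]
    (hdual : ∀ (b : B) (h : B →ₗ[A] A) (x : B), (b • h) x = h (x * b)) (d : ℕ) :
    ∀ (N : Type) [AddCommGroup N] [Module A N] [Module B (B →ₗ[A] N)],
      (∀ (b : B) (h : B →ₗ[A] N) (x : B), (b • h) x = h (x * b)) →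
      FlatDimLE A N d → FlatDimLE B (B →ₗ[A] N) d := by
  induction d with
  | zero => exact fun N _ _ _ hdualN hN => isFlat_linearMap hdual hdualN hN
  | succ d ih =>
    rintro N _ _ _ hdualN ⟨F, g, hF, hg, hker⟩
    let _ := homModule A B F
    let _ := homModule A B (LinearMap.ker g)
    let g' : (B →ₗ[A] F) →ₗ[B] (B →ₗ[A] N) :=
      { toFun := g.comp
        map_add' h h' := LinearMap.comp_add h h' g
        map_smul' b h := by ext x; rw [hdualN]; rfl }
    let e : (B →ₗ[A] LinearMap.ker g) ≃ₗ[B] LinearMap.ker g' :=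
      { toFun k := ⟨(LinearMap.ker g).subtype ∘ₗ k, LinearMap.ext fun y => (k y).2⟩
        invFun w := (w : B →ₗ[A] F).codRestrict _ fun y => LinearMap.congr_fun w.2 y
        map_add' _ _ := rfl
        map_smul' _ _ := rfl
        left_inv _ := rfl
        right_inv _ := rfl }
    refine ⟨ModuleCat.of B (B →ₗ[A] F), g', isFlat_linearMap hdual (fun _ _ _ => rfl) hF,
      fun h => Module.projective_lifting_property g h hg, ?_⟩
    exact FlatDimLE.of_linearEquiv e (ih _ (fun _ _ _ => rfl) hker)

theorem stmt16_general (A B : Type) [Ring A] [Ring B] (f : A →+* B)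
    [Module A B] (hAB : ∀ (a : A) (b : B), a • b = f a * b)
    (hfin : Module.Finite A B) (hproj : Module.Projective A B)
    [Module B (B →ₗ[A] A)]
    (hdual : ∀ (b : B) (h : B →ₗ[A] A) (x : B), (b • h) x = h (x * b))
    (hdualproj : Module.Projective B (B →ₗ[A] A))
    (M : Type) [AddCommGroup M] [Module A M]
    [Module B (B →ₗ[A] M)]
    (hdualM : ∀ (b : B) (h : B →ₗ[A] M) (x : B), (b • h) x = h (x * b))
    (d : ℕ) (hfd : FlatDimLE A M d) :
    FlatDimLE B (B →ₗ[A] M) d := by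
  have : IsScalarTower A B B := ⟨fun a x y => by simp only [smul_eq_mul, hAB, mul_assoc]⟩
  exact flatDimLE_linearMap hdual d M hdualM hfd

/-- Let `A → B` be a ring homomorphism such that `B` is finitely generated projective over `A`
and `Hom_A(B, A)` is projective as a `B`-module. Then for every `B`-module `M`,
`fd_B (Hom_A(B, M)) ≤ fd_A M`, where `Hom_A(B, M)` carries the `B`-module structure
`(b • h) x = h (x * b)` and `M` is an `A`-module by restriction of scalars. -/
theorem stmt16 (A B : Type) [Ring A] [Ring B] (f : A →+* B)
    [Module A B] (hAB : ∀ (a : A) (b : B), a • b = f a * b)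
    (hfin : Module.Finite A B) (hproj : Module.Projective A B)
    [Module B (B →ₗ[A] A)]
    (hdual : ∀ (b : B) (h : B →ₗ[A] A) (x : B), (b • h) x = h (x * b))
    (hdualproj : Module.Projective B (B →ₗ[A] A))
    (M : Type) [AddCommGroup M] [Module B M] [Module A M]
    (hM : ∀ (a : A) (m : M), a • m = f a • m)
    [Module B (B →ₗ[A] M)]
    (hdualM : ∀ (b : B) (h : B →ₗ[A] M) (x : B), (b • h) x = h (x * b))
    (d : ℕ) (hfd : FlatDimLE A M d) :
    FlatDimLE B (B →ₗ[A] M) d :=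
  stmt16_general A B f hAB hfin hproj hdual hdualproj M hdualM d hfd
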